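/- Let d ≥ 2 and q₁,…,q_d ≥ 2 be integers such that for every index i ∈ {1,…,d} there exists j ≠ i with q_j = q_i. Then there exists t ∈ ℝ^d with Q̂(t) = −1/(d−1); since Q̂ ≥ −1/(d−1) everywhere, the minimum of Q̂ equals −1/(d−1). -/

import Mathlib

open Finset Real

/-- `Q̂(t) = (1/D)·Σ_{i≠j} √(q_i q_j)·cos(t_i − t_j)`, where `D = (d−1)(q₁+⋯+q_d)`. -/
noncomputable def Qhat (d : ℕ) (q : Fin d → ℕ) (t : Fin d → ℝ) : ℝ :=
  (1 / (((d : ℝ) - 1) * ∑ j, (q j : ℝ))) *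
    ∑ p ∈ Finset.univ.offDiag,
      Real.sqrt ((q p.1 : ℝ) * (q p.2 : ℝ)) * Real.cos (t p.1 - t p.2)

/-! Writing `z(t) = ∑ⱼ √qⱼ · e^{i tⱼ}`, the off-diagonal sum in `Q̂` is `|z(t)|² − ∑ⱼ qⱼ`, so
`Q̂ ≥ −(∑ⱼ qⱼ)/D = −1/(d−1)`, with equality exactly when `z(t) = 0`. Since every value of `q` is
taken at least twice, `z(t)` vanishes when the indices sharing a value of `q` are spread over the
roots of unity of the corresponding order. -/

open Complex

theorem norm_sum_mul_exp_mul_I_sq {ι : Type*} [Fintype ι] (a t : ι → ℝ) :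
    ‖∑ j, (a j : ℂ) * exp (t j * I)‖ ^ 2 = ∑ i, ∑ j, a i * a j * Real.cos (t i - t j) := by
  have hre : (∑ j, (a j : ℂ) * exp (t j * I)).re = ∑ j, a j * Real.cos (t j) := by
    simp [re_sum, exp_ofReal_mul_I_re]
  have him : (∑ j, (a j : ℂ) * exp (t j * I)).im = ∑ j, a j * Real.sin (t j) := by
    simp [im_sum, exp_ofReal_mul_I_im]
  rw [Complex.sq_norm, normSq_apply, hre, him, sum_mul_sum, sum_mul_sum, ← sum_add_distrib]
  refine sum_congr rfl fun i _ => ?_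
  rw [← sum_add_distrib]
  refine sum_congr rfl fun j _ => ?_
  rw [Real.cos_sub]
  ring

theorem Finset.sum_offDiag_eq_sum_sum_sub_sum {ι M : Type*} [Fintype ι] [DecidableEq ι]
    [AddCommGroup M] (f : ι → ι → M) :
    ∑ p ∈ univ.offDiag, f p.1 p.2 = ∑ i, ∑ j, f i j - ∑ i, f i i := by
  rw [eq_sub_iff_add_eq, add_comm, ← sum_diag univ (fun p => f p.1 p.2),
    ← sum_union (disjoint_diag_offDiag _), diag_union_offDiag, sum_product]

theorem Qhat_eq (d : ℕ) (q : Fin d → ℕ) (t : Fin d → ℝ) :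
    Qhat d q t = (‖∑ j, (√(q j : ℝ) : ℂ) * exp (t j * I)‖ ^ 2 - ∑ j, (q j : ℝ)) /
      (((d : ℝ) - 1) * ∑ j, (q j : ℝ)) := by
  have hsqrt : ∀ i j, √((q i : ℝ) * q j) = √(q i : ℝ) * √(q j : ℝ) :=
    fun i j => Real.sqrt_mul (Nat.cast_nonneg _) _
  simp only [Qhat, hsqrt, sum_offDiag_eq_sum_sum_sub_sum fun i j => √(q i : ℝ) * √(q j : ℝ) *
    Real.cos (t i - t j), norm_sum_mul_exp_mul_I_sq, sub_self, Real.cos_zero, mul_one,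
    Real.mul_self_sqrt (Nat.cast_nonneg _)]
  ring

theorem Finset.exists_sum_exp_mul_I_eq_zero {α : Type*} {s : Finset α} (hs : 1 < #s) :
    ∃ θ : α → ℝ, ∑ j ∈ s, exp (θ j * I) = 0 := by
  classical
  set m := #s
  have hζ : IsPrimitiveRoot (exp (2 * π * I / m)) m := isPrimitiveRoot_exp m (by omega)
  let θ : α → ℝ := fun j => if h : j ∈ s then 2 * π * (s.equivFin ⟨j, h⟩ : ℕ) / m else 0
  refine ⟨θ, ?_⟩
  calc ∑ j ∈ s, exp (θ j * I)
      = ∑ j : s, exp (2 * π * I / m) ^ (s.equivFin j : ℕ) := by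
        rw [← sum_coe_sort]
        refine sum_congr rfl fun j _ => ?_
        rw [← Complex.exp_nat_mul]
        simp only [θ, j.2, dif_pos]
        push_cast
        ring_nf
    _ = ∑ k ∈ range m, exp (2 * π * I / m) ^ k := by
        rw [s.equivFin.sum_comp (fun k => exp (2 * π * I / m) ^ (k : ℕ)),
          Fin.sum_univ_eq_sum_range]
    _ = 0 := hζ.geom_sum_eq_zero hs

theorem exists_sum_mul_exp_mul_I_eq_zero {ι κ : Type*} [Fintype ι] [DecidableEq κ] {f : ι → κ}
    (hf : ∀ i, ∃ j, j ≠ i ∧ f j = f i) (c : κ → ℂ) :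
    ∃ t : ι → ℝ, ∑ j, c (f j) * exp (t j * I) = 0 := by
  have hfib : ∀ k ∈ univ.image f, ∃ θ : ι → ℝ, ∑ j with f j = k, exp (θ j * I) = 0 := by
    simp only [mem_image, mem_univ, true_and, forall_exists_index, forall_apply_eq_imp_iff]
    intro i
    obtain ⟨j, hji, hj⟩ := hf i
    exact exists_sum_exp_mul_I_eq_zero (one_lt_card.2 ⟨j, by simp [hj], i, by simp, hji⟩)
  choose! θ hθ using hfib
  refine ⟨fun j => θ (f j) j, ?_⟩
  rw [← sum_fiberwise_of_maps_to fun j _ => mem_image_of_mem f (mem_univ j)]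
  refine sum_eq_zero fun k hk => ?_
  have hfiber : ∀ j ∈ univ.filter (f · = k),
      c (f j) * exp (θ (f j) j * I) = c k * exp (θ k j * I) :=
    fun j hj => by rw [(mem_filter.1 hj).2]
  rw [sum_congr rfl hfiber, ← mul_sum, hθ k hk, mul_zero]

theorem Qhat_min_attained (d : ℕ) (hd : 2 ≤ d) (q : Fin d → ℕ) (hq : ∀ j, 2 ≤ q j)
    (hpair : ∀ i : Fin d, ∃ j : Fin d, j ≠ i ∧ q j = q i) :
    (∃ t : Fin d → ℝ, Qhat d q t = -(1 / ((d : ℝ) - 1))) ∧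
    (∀ t : Fin d → ℝ, -(1 / ((d : ℝ) - 1)) ≤ Qhat d q t) := by
  have hd1 : (0 : ℝ) < d - 1 := by
    have : (2 : ℝ) ≤ d := by exact_mod_cast hd
    linarith
  have hq0 : (0 : ℝ) < ∑ j, (q j : ℝ) :=
    sum_pos (fun j _ => by exact_mod_cast (hq j).trans_lt' two_pos)
      (univ_nonempty_iff.2 ⟨⟨0, by omega⟩⟩)
  have hmin : -(1 / ((d : ℝ) - 1)) =
      (0 - ∑ j, (q j : ℝ)) / (((d : ℝ) - 1) * ∑ j, (q j : ℝ)) := by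
    field_simp
    ring
  refine ⟨?_, fun t => ?_⟩
  · obtain ⟨t, ht⟩ := exists_sum_mul_exp_mul_I_eq_zero hpair fun n => (√(n : ℝ) : ℂ)
    refine ⟨t, ?_⟩
    rw [Qhat_eq, ht, norm_zero, hmin]
    ring
  · rw [Qhat_eq, hmin]
    gcongr
    positivity
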